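/- In a finitely complete category with binary coproducts in which binary coproducts of pullback squares are pullback squares, binary coproducts of feeble pullback squares are feeble pullback squares (assuming regular epimorphisms are closed under binary coproduct, which holds since coproducts of regular epimorphisms are regular epimorphisms). -/

import Mathlib

open CategoryTheory Limits

/-- A commutative square (top `fst`, left `snd`, right `f`, bottom `g`) is a feeble
pullback if the canonical comparison morphism into the pullback is a regular
epimorphism. -/
def IsFeeblePullback {C : Type*} [CategoryTheory.Category C] {P X Y Z : C}
    (fst : P ⟶ X) (snd : P ⟶ Y) (f : X ⟶ Z) (g : Y ⟶ Z)
    [CategoryTheory.Limits.HasPullback f g] : Prop :=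
  ∃ w : fst ≫ f = snd ≫ g,
    Nonempty (CategoryTheory.RegularEpi (CategoryTheory.Limits.pullback.lift fst snd w))

/-- Regular epimorphisms are stable under pullback. -/
def RegularEpisPullbackStable (C : Type*) [CategoryTheory.Category C]
    [CategoryTheory.Limits.HasPullbacks C] : Prop :=
  ∀ {X Y Z : C} (f : X ⟶ Z) (g : Y ⟶ Z), CategoryTheory.RegularEpi g →
    Nonempty (CategoryTheory.RegularEpi (CategoryTheory.Limits.pullback.fst f g))

/-- Kernel pairs admit coequalizers. -/
def HasKernelPairCoequalizers (C : Type*) [CategoryTheory.Category C]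
    [CategoryTheory.Limits.HasPullbacks C] : Prop :=
  ∀ {X Y : C} (f : X ⟶ Y),
    CategoryTheory.Limits.HasCoequalizer (CategoryTheory.Limits.pullback.fst f f)
      (CategoryTheory.Limits.pullback.snd f f)

/-- Binary coproducts of pullback squares are pullback squares. -/
def CoprodOfPullbacksIsPullback (C : Type*) [CategoryTheory.Category C]
    [HasBinaryCoproducts C] : Prop :=
  ∀ {P X Y Z P' X' Y' Z' : C}
    (fst : P ⟶ X) (snd : P ⟶ Y) (f : X ⟶ Z) (g : Y ⟶ Z)
    (fst' : P' ⟶ X') (snd' : P' ⟶ Y') (f' : X' ⟶ Z') (g' : Y' ⟶ Z'),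
    IsPullback fst snd f g → IsPullback fst' snd' f' g' →
      IsPullback (coprod.map fst fst') (coprod.map snd snd')
        (coprod.map f f') (coprod.map g g')

/-!
A square is a feeble pullback exactly when it is a regular epimorphism followed by a pullback
square. The coproduct of two such factorizations is again one: the coproduct of the regular
epimorphisms is regular by assumption, and the coproduct of the pullback squares is a pullback.
-/

theorem CategoryTheory.IsPullback.lift_comp_eq_comp_isoPullback_hom {C : Type*} [Category C]
    {V P X Y Z : C} {p : P ⟶ X} {q : P ⟶ Y} {f : X ⟶ Z} {g : Y ⟶ Z} (hP : IsPullback p q f g)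
    [HasPullback f g] (k : V ⟶ P) :
    pullback.lift (k ≫ p) (k ≫ q) (by simp [hP.w]) = k ≫ hP.isoPullback.hom := by
  apply pullback.hom_ext <;> simp only [pullback.lift_fst, pullback.lift_snd, Category.assoc,
    hP.isoPullback_hom_fst, hP.isoPullback_hom_snd]

theorem IsFeeblePullback.of_regularEpi_comp_isPullback {C : Type*} [Category C] {V P X Y Z : C}
    {p : P ⟶ X} {q : P ⟶ Y} {f : X ⟶ Z} {g : Y ⟶ Z} (hP : IsPullback p q f g)
    [HasPullback f g] {k : V ⟶ P} (hk : RegularEpi k) :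
    IsFeeblePullback (k ≫ p) (k ≫ q) f g := by
  refine ⟨by simp [hP.w], ⟨?_⟩⟩
  rw [hP.lift_comp_eq_comp_isoPullback_hom]
  exact RegularEpi.ofArrowIso (Arrow.isoMk (f := Arrow.mk k) (Iso.refl _) hP.isoPullback) hk

/-- In a finitely complete category with binary coproducts in which binary coproducts of
pullback squares are pullback squares and regular epimorphisms are closed under binary
coproduct, binary coproducts of feeble pullback squares are feeble pullback squares. -/
theorem coprod_of_feeble_pullbacks {C : Type*} [Category C]
    [HasFiniteLimits C] [HasBinaryCoproducts C]
    (hco : CoprodOfPullbacksIsPullback C)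
    (hre : ∀ {X Y X' Y' : C} (p : X ⟶ Y) (p' : X' ⟶ Y'), RegularEpi p → RegularEpi p' →
      Nonempty (RegularEpi (coprod.map p p')))
    {P X Y Z P' X' Y' Z' : C}
    (fst : P ⟶ X) (snd : P ⟶ Y) (f : X ⟶ Z) (g : Y ⟶ Z)
    (fst' : P' ⟶ X') (snd' : P' ⟶ Y') (f' : X' ⟶ Z') (g' : Y' ⟶ Z')
    (h : IsFeeblePullback fst snd f g) (h' : IsFeeblePullback fst' snd' f' g') :
    IsFeeblePullback (coprod.map fst fst') (coprod.map snd snd')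
      (coprod.map f f') (coprod.map g g') := by
  obtain ⟨w, ⟨hk⟩⟩ := h
  obtain ⟨w', ⟨hk'⟩⟩ := h'
  obtain ⟨hkk'⟩ := hre _ _ hk hk'
  have hP := hco _ _ f g _ _ f' g' (.of_hasPullback f g) (.of_hasPullback f' g')
  simpa only [coprod.map_map, pullback.lift_fst, pullback.lift_snd] using
    IsFeeblePullback.of_regularEpi_comp_isPullback hP hkk'
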